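/- arXiv:0707.4628 — 8 statements merged into one kernel-verified Lean document; each statement's English description precedes it below -/
import Mathlib

section
/- For every order pattern π of length N+1 (i.e., every permutation of {0,1,...,N}), there exists a point ω in the one-sided full shift space on N ≥ 2 symbols such that the orbit segment ω, Σω, Σ²ω, ..., Σ^N ω realizes π, i.e., Σ^{π₀}ω < Σ^{π₁}ω < ... < Σ^{π_N}ω in the lexicographic order. -/
/-!
Take `ω` periodic of period `N + 1`, the symbol at `n` depending only on the rank `π⁻¹ n` of the
position `n mod (N + 1)`. Read in ranks, the rotation `p ↦ p + 1` becomes a permutation `σ`, and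
the symbol of rank `r` is the number of descents `σ (k + 1) < σ k` with `k < r`. Equal symbols at
ranks `a < b` force `σ a < σ b`, so the ranks stay ordered as long as the two itineraries agree,
and at the first disagreement the symbols compare in the right direction. A disagreement exists:
the ranks along the orbits of two positions have the same sum, so they cannot be ordered
termwise. At most `N - 1` descents occur: otherwise `σ` is order-reversing, hence an involution, while the
rotation by `2` is not the identity once `N ≥ 2`.
-/

def oshift {N : ℕ} (ω : ℕ → Fin N) : ℕ → Fin N := fun n => ω (n + 1)

def lexLt {N : ℕ} (ω ω' : ℕ → Fin N) : Prop :=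
  ∃ n, (∀ k, k < n → ω k = ω' k) ∧ ω n < ω' n

open Fin.NatCast

lemma oshift_iterate_apply {N : ℕ} (a : ℕ) (ω : ℕ → Fin N) (n : ℕ) :
    oshift^[a] ω n = ω (n + a) := by
  induction a generalizing n with
  | zero => rfl
  | succ a ih =>
    rw [Function.iterate_succ_apply', oshift, ih]
    ac_rfl

section Itinerary

variable {α : Type*} [LinearOrder α] {f : α → α}

lemma iterate_lt_of_itinerary_eq {γ : Type*} {c : α → γ}
    (hstep : ∀ a b, a < b → c a = c b → f a < f b) {a b : α}
    (hab : a < b) {k : ℕ} (heq : ∀ j < k, c (f^[j] a) = c (f^[j] b)) : f^[k] a < f^[k] b := by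
  induction k with
  | zero => exact hab
  | succ k ih =>
    rw [Function.iterate_succ_apply', Function.iterate_succ_apply']
    exact hstep _ _ (ih fun j hj => heq j (by omega)) (heq k k.lt_succ_self)

lemma lexLt_itinerary {N : ℕ} {c : α → Fin N} (hc : Monotone c)
    (hstep : ∀ a b, a < b → c a = c b → f a < f b) {a b : α} (hab : a < b)
    (hne : ∃ k, c (f^[k] a) ≠ c (f^[k] b)) :
    lexLt (fun k => c (f^[k] a)) (fun k => c (f^[k] b)) := by
  classical
  have hprefix : ∀ j < Nat.find hne, c (f^[j] a) = c (f^[j] b) :=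
    fun j hj => not_not.1 (Nat.find_min hne hj)
  exact ⟨Nat.find hne, hprefix,
    (hc (iterate_lt_of_itinerary_eq hstep hab hprefix).le).lt_of_ne (Nat.find_spec hne)⟩

end Itinerary

lemma exists_not_apply_add_lt {G M : Type*} [AddGroup G] [Fintype G] [AddCommMonoid M]
    [PartialOrder M] [IsOrderedCancelAddMonoid M] (r : G → M) (p q : G) :
    ∃ z, ¬ r (p + z) < r (q + z) := by
  by_contra! h
  have hsum := Finset.sum_lt_sum_of_nonempty Finset.univ_nonempty fun z _ => h z
  rw [Fintype.sum_equiv (Equiv.addLeft p) (fun z => r (p + z)) r fun _ => rfl,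
    Fintype.sum_equiv (Equiv.addLeft q) (fun z => r (q + z)) r fun _ => rfl] at hsum
  exact hsum.false

lemma StrictAnti.involutive {α : Type*} [LinearOrder α] [Finite α] {f : α → α}
    (hf : StrictAnti f) : Function.Involutive f :=
  fun _ => (hf.comp hf).apply_eq

section Descents

variable {β : Type*} [LinearOrder β]

def descentCount (g : ℕ → β) : ℕ → ℕ := Nat.count fun k => g (k + 1) < g k

lemma descentCount_monotone (g : ℕ → β) : Monotone (descentCount g) := Nat.count_monotone _

lemma descentCount_lt_self {g : ℕ → β} {n : ℕ} (h : ∃ k < n, ¬ g (k + 1) < g k) :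
    descentCount g n < n := by
  classical
  rw [descentCount, Nat.count_eq_card_filter_range]
  obtain ⟨k, hk, hasc⟩ := h
  simpa using Finset.card_lt_card (Finset.filter_ssubset.2 ⟨k, Finset.mem_range.2 hk, hasc⟩)

lemma lt_of_descentCount_eq {g : ℕ → β} (hg : ∀ k, g (k + 1) ≠ g k) {a b : ℕ} (hab : a < b)
    (h : descentCount g a = descentCount g b) : g a < g b := by
  have hascent : ∀ k ∈ Set.Ico a b, g k < g (k + 1) := by
    rintro k ⟨hak, hkb⟩
    have hflat : descentCount g k = descentCount g (k + 1) := by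
      have := descentCount_monotone g hak
      have := descentCount_monotone g (show k + 1 ≤ b from hkb)
      have := descentCount_monotone g (Nat.le_add_right k 1)
      omega
    refine (not_lt.1 fun hdesc => ?_).lt_of_ne (hg k).symm
    exact hflat.not_lt (Nat.count_lt_count_succ_iff.2 hdesc)
  refine strictMonoOn_of_lt_succ Set.ordConnected_Icc (fun k _ hk hk' => ?_)
    (Set.left_mem_Icc.2 hab.le) (Set.right_mem_Icc.2 hab.le) hab
  rw [Order.succ_eq_add_one] at hk' ⊢
  exact hascent k ⟨hk.1, by simpa using hk'.2⟩

end Descents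

section RankDynamics

variable {N : ℕ} (π : Equiv.Perm (Fin (N + 1)))

def rankShift (r : Fin (N + 1)) : Fin (N + 1) := π.symm (π r + 1)

lemma rankShift_iterate (k : ℕ) (r : Fin (N + 1)) : (rankShift π)^[k] r = π.symm (π r + k) := by
  induction k with
  | zero => simp
  | succ k ih => simp [Function.iterate_succ_apply', ih, rankShift, add_assoc]

def rankCode (r : Fin (N + 1)) : ℕ := descentCount (fun k : ℕ => rankShift π k) r

lemma rankCode_monotone : Monotone (rankCode π) := fun _ _ h => descentCount_monotone _ h

lemma rankShift_lt_of_rankCode_eq (hN : N ≠ 0) {a b : Fin (N + 1)} (hab : a < b)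
    (h : rankCode π a = rankCode π b) : rankShift π a < rankShift π b := by
  have hne : ∀ k : ℕ, rankShift π ((k + 1 : ℕ) : Fin (N + 1)) ≠ rankShift π k := by
    intro k
    simpa [rankShift, Fin.one_eq_zero_iff] using hN
  simpa using lt_of_descentCount_eq hne hab h

lemma exists_not_rankShift_descent (hN : 2 ≤ N) :
    ∃ k < N, ¬ rankShift π ((k + 1 : ℕ) : Fin (N + 1)) < rankShift π k := by
  by_contra! h
  have hanti : StrictAnti (rankShift π) :=
    Fin.strictAnti_iff_succ_lt.2 fun i => by simpa [Fin.coe_eq_castSucc] using h i i.isLt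
  have hinv : (rankShift π)^[2] 0 = 0 := hanti.involutive 0
  rw [rankShift_iterate, Equiv.symm_apply_eq, add_eq_left, Fin.natCast_eq_zero] at hinv
  exact absurd (Nat.le_of_dvd two_pos hinv) (by omega)

lemma rankCode_lt (hN : 2 ≤ N) (r : Fin (N + 1)) : rankCode π r < N :=
  (rankCode_monotone π (Fin.le_last r)).trans_lt
    (descentCount_lt_self (exists_not_rankShift_descent π hN))

lemma exists_rankCode_iterate_ne (hN : N ≠ 0) {a b : Fin (N + 1)} (hab : a < b) :
    ∃ k, rankCode π ((rankShift π)^[k] a) ≠ rankCode π ((rankShift π)^[k] b) := by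
  by_contra! h
  have hlt : ∀ k : ℕ, (rankShift π)^[k] a < (rankShift π)^[k] b := fun k =>
    iterate_lt_of_itinerary_eq (fun _ _ => rankShift_lt_of_rankCode_eq π hN) hab fun j _ => h j
  obtain ⟨z, hz⟩ := exists_not_apply_add_lt (fun p => (π.symm p : ℕ)) (π a) (π b)
  exact hz (by simpa [rankShift_iterate] using hlt z)

end RankDynamics

/-- Every order pattern of length `N+1` is realized by some point of the
one-sided full shift on `N ≥ 2` symbols. -/
theorem shift_realizes_length_succ (N : ℕ) (hN : 2 ≤ N)
    (π : Equiv.Perm (Fin (N + 1))) :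
    ∃ ω : ℕ → Fin N, ∀ i j : Fin (N + 1), i < j →
      lexLt (oshift^[(π i : ℕ)] ω) (oshift^[(π j : ℕ)] ω) := by
  have hN0 : N ≠ 0 := by omega
  let c : Fin (N + 1) → Fin N := fun r => ⟨rankCode π r, rankCode_lt π hN r⟩
  have horbit : ∀ i, oshift^[(π i : ℕ)] (fun n => c (π.symm n)) =
      fun k => c ((rankShift π)^[k] i) := by
    intro i
    funext k
    simp [oshift_iterate_apply, rankShift_iterate, add_comm]
  refine ⟨fun n => c (π.symm n), fun i j hij => ?_⟩
  rw [horbit, horbit]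
  obtain ⟨k, hk⟩ := exists_rankCode_iterate_ne π hN0 hij
  exact lexLt_itinerary (fun _ _ h => rankCode_monotone π h)
    (fun _ _ hab h => rankShift_lt_of_rankCode_eq π hN0 hab (congrArg Fin.val h)) hij
    ⟨k, fun h => hk (congrArg Fin.val h)⟩
end

section
/- The one-sided shift on N ≥ 2 symbols has no forbidden patterns of length L ≤ N+1: every permutation of {0,1,...,L-1} with L ≤ N+1 is realized by some point of the shift space. -/
set_option maxHeartbeats 1000000


lemma oshift_iter {N : ℕ} (ω : ℕ → Fin N) (k n : ℕ) :
    (oshift^[k] ω) n = ω (n + k) := by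
  induction k generalizing ω with
  | zero => rfl
  | succ m ih =>
    rw [Function.iterate_succ_apply, ih]
    show ω (n + m + 1) = ω (n + (m + 1))
    rw [Nat.add_assoc]

lemma lexLt_step {N : ℕ} {ω ω' : ℕ → Fin N} (h0 : ω 0 = ω' 0)
    (h : lexLt (oshift ω) (oshift ω')) : lexLt ω ω' := by
  obtain ⟨n, hk, hn⟩ := h
  refine ⟨n + 1, ?_, hn⟩
  intro k hk'
  cases k with
  | zero => exact h0
  | succ m => exact hk m (by omega)

/-- the letter assignment collapsing ranks `t` and `t+1` -/
def gfun (t i : ℕ) : ℕ := if i ≤ t then i else i - 1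

lemma gfun_lt {t i j : ℕ} (hij : i < j) (h : ¬(i = t ∧ j = t + 1)) :
    gfun t i < gfun t j := by
  rcases not_and_or.mp h with h | h <;> (unfold gfun; split <;> split <;> omega)

lemma gfun_bound {t i N : ℕ} (ht : t < N) (hi : i ≤ N) : gfun t i < N := by
  unfold gfun; split <;> omega

/-- the rank of position `p` -/
def rk {N : ℕ} (π : Equiv.Perm (Fin (N + 1))) (p : ℕ) : ℕ :=
  if h : p < N + 1 then (π.symm ⟨p, h⟩ : ℕ) else 0

lemma rk_le {N : ℕ} (π : Equiv.Perm (Fin (N + 1))) (p : ℕ) : rk π p ≤ N := by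
  unfold rk; split
  · exact Nat.lt_succ_iff.mp (Fin.is_lt _)
  · omega

lemma rk_eq_iff {N : ℕ} (π : Equiv.Perm (Fin (N + 1))) {p : ℕ} (h : p < N + 1)
    (i : Fin (N + 1)) : rk π p = (i : ℕ) ↔ p = (π i : ℕ) := by
  unfold rk
  rw [dif_pos h, ← Fin.ext_iff, Equiv.symm_apply_eq, Fin.ext_iff]

lemma rk_nat_iff {N : ℕ} (π : Equiv.Perm (Fin (N + 1))) {p i : ℕ} (hp : p < N + 1)
    (hi : i < N + 1) : rk π p = i ↔ p = (π ⟨i, hi⟩ : ℕ) :=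
  rk_eq_iff π hp ⟨i, hi⟩

lemma rk_apply_pi {N : ℕ} (π : Equiv.Perm (Fin (N + 1))) {i : ℕ} (hi : i < N + 1) :
    rk π ((π ⟨i, hi⟩ : Fin (N + 1)) : ℕ) = i :=
  (rk_nat_iff π (Fin.is_lt _) hi).mpr rfl

/-- the candidate sequence: letter `gfun t (rank k)` at position `k ≤ N`, tail `c` -/
def bseq {N : ℕ} (π : Equiv.Perm (Fin (N + 1))) (t : ℕ) (ht : t < N) (c : Fin N) :
    ℕ → Fin N :=
  fun k => if h : k < N + 1 then ⟨gfun t (rk π k), gfun_bound ht (rk_le π k)⟩ else c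

lemma bseq_val {N : ℕ} (π : Equiv.Perm (Fin (N + 1))) (t : ℕ) (ht : t < N) (c : Fin N)
    {k : ℕ} (h : k < N + 1) : (bseq π t ht c k : ℕ) = gfun t (rk π k) := by
  unfold bseq; rw [dif_pos h]

lemma bseq_tail {N : ℕ} (π : Equiv.Perm (Fin (N + 1))) (t : ℕ) (ht : t < N) (c : Fin N)
    {k : ℕ} (h : N + 1 ≤ k) : bseq π t ht c k = c := by
  unfold bseq; rw [dif_neg (by omega)]

/-- All pairs except the flat pair `(t, t+1)` are decided at the first letter. -/
lemma bseq_main {N : ℕ} (π : Equiv.Perm (Fin (N + 1))) (t : ℕ) (ht : t < N) (c : Fin N)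
    (hflat : lexLt (oshift^[(π ⟨t, by omega⟩ : ℕ) + 1] (bseq π t ht c))
                   (oshift^[(π ⟨t + 1, by omega⟩ : ℕ) + 1] (bseq π t ht c))) :
    ∀ i j : Fin (N + 1), i < j →
      lexLt (oshift^[(π i : ℕ)] (bseq π t ht c)) (oshift^[(π j : ℕ)] (bseq π t ht c)) := by
  intro i j hij
  have hij' : (i : ℕ) < (j : ℕ) := hij
  by_cases hcase : (i : ℕ) = t ∧ (j : ℕ) = t + 1
  · have hi : i = ⟨t, Nat.lt_succ_of_lt ht⟩ := Fin.ext hcase.1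
    have hj : j = ⟨t + 1, Nat.succ_lt_succ ht⟩ := Fin.ext hcase.2
    rw [hi, hj]
    apply lexLt_step
    · rw [oshift_iter, oshift_iter, Nat.zero_add, Nat.zero_add]
      apply Fin.ext
      rw [bseq_val π t ht c (Fin.is_lt _), bseq_val π t ht c (Fin.is_lt _),
        rk_apply_pi π (by omega), rk_apply_pi π (by omega)]
      unfold gfun
      split <;> split <;> omega
    · rw [← Function.iterate_succ_apply' oshift, ← Function.iterate_succ_apply' oshift]
      exact hflat
  · refine ⟨0, fun k hk => absurd hk (Nat.not_lt_zero k), ?_⟩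
    rw [Fin.lt_def, oshift_iter, oshift_iter, Nat.zero_add, Nat.zero_add,
      bseq_val π t ht c (Fin.is_lt _), bseq_val π t ht c (Fin.is_lt _)]
    have h1 : rk π (π i : ℕ) = (i : ℕ) := by
      rw [rk_eq_iff π (Fin.is_lt _) i]
    have h2 : rk π (π j : ℕ) = (j : ℕ) := by
      rw [rk_eq_iff π (Fin.is_lt _) j]
    rw [h1, h2]
    exact gfun_lt hij' hcase

/-- A good flat position always exists. -/
lemma exists_good (N : ℕ) (hN : 2 ≤ N) (π : Equiv.Perm (Fin (N + 1))) :
    ∃ t, ∃ ht : t < N,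
      ((π ⟨t, by omega⟩ : ℕ) < N ∧ (π ⟨t + 1, by omega⟩ : ℕ) < N ∧
        rk π ((π ⟨t, by omega⟩ : ℕ) + 1) < rk π ((π ⟨t + 1, by omega⟩ : ℕ) + 1)) ∨
      ((π ⟨t, by omega⟩ : ℕ) = N ∧ (0 < t ∨ (π ⟨t + 1, by omega⟩ : ℕ) ≠ N - 1)) ∨
      ((π ⟨t + 1, by omega⟩ : ℕ) = N ∧ (t < N - 1 ∨ (π ⟨t, by omega⟩ : ℕ) ≠ N - 1)) := by
  by_contra hcon
  push_neg at hcon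
  have hNpos : 0 < N := by omega
  have h1N : 1 < N + 1 := Nat.lt_succ_of_le (le_trans one_le_two hN)
  have h2N : 1 + 1 < N + 1 := Nat.lt_succ_of_le hN
  have hN1 : N - 1 < N + 1 := Nat.lt_succ_of_le (Nat.sub_le N 1)
  have hN2 : N - 2 < N + 1 := Nat.lt_succ_of_le (Nat.sub_le N 2)
  have hN11 : N - 1 + 1 < N + 1 := Nat.succ_lt_succ (Nat.sub_lt hNpos Nat.one_pos)
  have hN21 : N - 2 + 1 < N + 1 := Nat.succ_lt_succ (Nat.sub_lt hNpos Nat.zero_lt_two)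
  set t0 : Fin (N + 1) := π.symm ⟨N, Nat.lt_succ_self N⟩ with ht0
  have hpt0 : π t0 = ⟨N, Nat.lt_succ_self N⟩ := by rw [ht0, Equiv.apply_symm_apply]
  have hpt0v : (π t0 : ℕ) = N := by rw [hpt0]
  have hval : ∀ (i : Fin (N + 1)), i ≠ t0 → (π i : ℕ) < N := by
    intro i hi
    have h1 : (π i : ℕ) ≤ N := Nat.lt_succ_iff.mp (Fin.is_lt _)
    rcases Nat.lt_or_ge (π i : ℕ) N with h | h
    · exact h
    · exfalso
      have hv : π i = ⟨N, Nat.lt_succ_self N⟩ := Fin.ext (le_antisymm h1 h)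
      exact hi (π.injective (hv.trans hpt0.symm))
  rcases Nat.eq_zero_or_pos (t0 : ℕ) with h0 | h0
  · -- t0 = 0 : π 0 = N, ¬G2 at t = 0 forces π 1 = N - 1, then ¬G1 at t = 1 fails
    have hm0 : (⟨0, Nat.succ_pos N⟩ : Fin (N + 1)) = t0 := Fin.ext h0.symm
    have hp0 : (π ⟨0, Nat.succ_pos N⟩ : ℕ) = N := by rw [hm0, hpt0v]
    have hG2 := (hcon 0 (by omega)).2.1 hp0
    have hp1' : (π ⟨1, h1N⟩ : ℕ) = N - 1 := hG2.2
    have hp2lt : (π ⟨1 + 1, h2N⟩ : ℕ) < N := by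
      apply hval
      intro h
      have := congrArg Fin.val h
      simp only [Fin.val_mk] at this
      omega
    have hG1 := (hcon 1 (by omega)).1 (by rw [hp1']; omega) hp2lt
    -- rk π ((π ⟨1,_⟩ : ℕ) + 1) = rk π N = t0 = 0
    have hrkN : rk π N = (t0 : ℕ) := by
      rw [rk_eq_iff π (Nat.lt_succ_self N) t0, hpt0v]
    have hcongr : rk π ((π ⟨1, h1N⟩ : ℕ) + 1) = rk π N := by
      congr 1
      omega
    have hr2 : rk π ((π ⟨1 + 1, h2N⟩ : ℕ) + 1) = (t0 : ℕ) := by omega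
    have hkey := ((rk_eq_iff π (by omega) t0).mp hr2).trans hpt0v
    -- π ⟨2⟩ = N - 1 = π ⟨1⟩
    have heq : π ⟨1 + 1, h2N⟩ = π ⟨1, h1N⟩ := Fin.ext (by
      show (π ⟨1 + 1, h2N⟩ : ℕ) = (π ⟨1, h1N⟩ : ℕ)
      omega)
    have := congrArg Fin.val (π.injective heq)
    simp only [Fin.val_mk] at this
    omega
  · rcases Nat.lt_or_ge (t0 : ℕ) N with hlt | hge
    · -- 0 < t0 < N : ¬G2 at t0 gives t0 = 0, contradiction
      have hpt : (π ⟨(t0 : ℕ), Fin.is_lt t0⟩ : ℕ) = N := by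
        rw [Fin.eta, hpt0v]
      have hG2 := (hcon (t0 : ℕ) hlt).2.1 hpt
      omega
    · -- t0 = N : ¬G3 at N - 1 forces π (N-1) = N - 1, then ¬G1 at N - 2 fails
      have ht0N : (t0 : ℕ) = N := by have := Fin.is_lt t0; omega
      have hmN : (⟨N - 1 + 1, hN11⟩ : Fin (N + 1)) = t0 := Fin.ext (by
        show N - 1 + 1 = (t0 : ℕ); omega)
      have hpN : (π ⟨N - 1 + 1, hN11⟩ : ℕ) = N := by rw [hmN, hpt0v]
      have hG3 := (hcon (N - 1) (by omega)).2.2 hpN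
      have hpN1 : (π ⟨N - 1, hN1⟩ : ℕ) = N - 1 := hG3.2
      have hpN2lt : (π ⟨N - 2, hN2⟩ : ℕ) < N := by
        apply hval
        intro h
        have := congrArg Fin.val h
        simp only [Fin.val_mk] at this
        omega
      have hm21 : (⟨N - 2 + 1, hN21⟩ : Fin (N + 1)) = ⟨N - 1, hN1⟩ := Fin.ext (by
        show N - 2 + 1 = N - 1; omega)
      have hG1 := (hcon (N - 2) (by omega)).1 hpN2lt (by rw [hm21, hpN1]; omega)
      have hrkN : rk π N = (t0 : ℕ) := by
        rw [rk_eq_iff π (Nat.lt_succ_self N) t0, hpt0v]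
      have hv21 : (π ⟨N - 2 + 1, hN21⟩ : ℕ) = N - 1 := by rw [hm21]; exact hpN1
      have hcongr : rk π ((π ⟨N - 2 + 1, hN21⟩ : ℕ) + 1) = rk π N := by
        congr 1
        omega
      have hle := rk_le π ((π ⟨N - 2, hN2⟩ : ℕ) + 1)
      have hr2 : rk π ((π ⟨N - 2, hN2⟩ : ℕ) + 1) = (t0 : ℕ) := by omega
      have hkey := ((rk_eq_iff π (by omega) t0).mp hr2).trans hpt0v
      have heq : π ⟨N - 2, hN2⟩ = π ⟨N - 1, hN1⟩ := Fin.ext (by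
        show (π ⟨N - 2, hN2⟩ : ℕ) = (π ⟨N - 1, hN1⟩ : ℕ)
        omega)
      have := congrArg Fin.val (π.injective heq)
      simp only [Fin.val_mk] at this
      omega

/-- The one-sided shift on `N ≥ 2` symbols has no forbidden patterns of length
`L ≤ N + 1`: every permutation of `{0,...,L-1}` is realized by some point. -/
theorem shift_no_forbidden_short (N L : ℕ) (hN : 2 ≤ N) (hL : L ≤ N + 1)
    (π : Equiv.Perm (Fin L)) :
    ∃ ω : ℕ → Fin N, ∀ i j : Fin L, i < j →
      lexLt (oshift^[(π i : ℕ)] ω) (oshift^[(π j : ℕ)] ω) := by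
  classical
  rcases Nat.lt_or_ge L (N + 1) with hL' | hL'
  · -- easy case L ≤ N : the first letters decide everything
    have hLN : L ≤ N := by omega
    refine ⟨fun k => if h : k < L then ⟨(π.symm ⟨k, h⟩ : ℕ), lt_of_lt_of_le (Fin.is_lt _) hLN⟩
      else ⟨0, by omega⟩, ?_⟩
    intro i j hij
    refine ⟨0, fun k hk => absurd hk (Nat.not_lt_zero k), ?_⟩
    rw [Fin.lt_def, oshift_iter, oshift_iter, Nat.zero_add, Nat.zero_add,
      dif_pos (Fin.is_lt (π i)), dif_pos (Fin.is_lt (π j))]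
    simp only [Fin.val_mk, Fin.eta, Equiv.symm_apply_apply]
    exact hij
  · -- hard case L = N + 1
    have hLeq : L = N + 1 := le_antisymm hL hL'
    subst hLeq
    obtain ⟨t, ht, hG⟩ := exists_good N hN π
    have hc0 : (0 : ℕ) < N := by omega
    have htN : t < N + 1 := by omega
    have ht1N : t + 1 < N + 1 := by omega
    rcases hG with ⟨ha, hb, hr⟩ | ⟨ha, hor⟩ | ⟨hb, hor⟩
    · -- G1 : both successors inside, ranks ordered
      refine ⟨bseq π t ht ⟨0, hc0⟩, bseq_main π t ht ⟨0, hc0⟩ ?_⟩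
      refine ⟨0, fun k hk => absurd hk (Nat.not_lt_zero k), ?_⟩
      rw [Fin.lt_def, oshift_iter, oshift_iter, Nat.zero_add, Nat.zero_add,
        bseq_val π t ht _ (by omega), bseq_val π t ht _ (by omega)]
      apply gfun_lt
      · exact hr
      · rintro ⟨h1, h2⟩
        have := (rk_nat_iff π (by omega) htN).mp h1
        omega
    · -- G2 : π t = N ; tail 0
      refine ⟨bseq π t ht ⟨0, hc0⟩, bseq_main π t ht ⟨0, hc0⟩ ?_⟩
      have hbN : (π ⟨t + 1, ht1N⟩ : ℕ) < N := by
        have h1 : (π ⟨t + 1, ht1N⟩ : ℕ) ≤ N := Nat.lt_succ_iff.mp (Fin.is_lt _)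
        rcases Nat.lt_or_ge (π ⟨t + 1, ht1N⟩ : ℕ) N with h | h
        · exact h
        · exfalso
          have heq : π ⟨t + 1, ht1N⟩ = π ⟨t, htN⟩ := Fin.ext (by
            show (π ⟨t + 1, ht1N⟩ : ℕ) = (π ⟨t, htN⟩ : ℕ); omega)
          have := congrArg Fin.val (π.injective heq)
          simp only [Fin.val_mk] at this
          omega
      have hrkN : rk π N = t := by
        rw [rk_nat_iff π (Nat.lt_succ_self N) htN]
        omega
      rw [show (π ⟨t, by omega⟩ : ℕ) = N from ha]
      have hex : ∃ m, 0 < (bseq π t ht ⟨0, hc0⟩ (m + ((π ⟨t + 1, ht1N⟩ : ℕ) + 1)) : ℕ) := by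
        rcases Nat.eq_zero_or_pos t with ht0 | ht0
        · -- t = 0 : the condition gives π (t+1) ≠ N - 1
          have hbne : (π ⟨t + 1, ht1N⟩ : ℕ) ≠ N - 1 := by
            rcases hor with h | h
            · omega
            · exact h
          refine ⟨0, ?_⟩
          rw [Nat.zero_add, bseq_val π t ht _ (by omega)]
          have hne0 : rk π ((π ⟨t + 1, ht1N⟩ : ℕ) + 1) ≠ 0 := by
            intro h
            have h' : rk π ((π ⟨t + 1, ht1N⟩ : ℕ) + 1) = t := by omega
            have := (rk_nat_iff π (by omega) htN).mp h'
            omega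
          have hne1 : rk π ((π ⟨t + 1, ht1N⟩ : ℕ) + 1) ≠ 1 := by
            intro h
            have h' : rk π ((π ⟨t + 1, ht1N⟩ : ℕ) + 1) = t + 1 := by omega
            have := (rk_nat_iff π (by omega) ht1N).mp h'
            omega
          unfold gfun
          split <;> omega
        · refine ⟨N - ((π ⟨t + 1, ht1N⟩ : ℕ) + 1), ?_⟩
          have hsum : N - ((π ⟨t + 1, ht1N⟩ : ℕ) + 1) + ((π ⟨t + 1, ht1N⟩ : ℕ) + 1) = N := by
            omega
          rw [hsum, bseq_val π t ht _ (Nat.lt_succ_self N), hrkN]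
          unfold gfun
          split <;> omega
      refine ⟨Nat.find hex, ?_, ?_⟩
      · intro k hk
        have hnk := Nat.find_min hex hk
        apply Fin.ext
        rw [oshift_iter, oshift_iter]
        rw [bseq_tail π t ht _ (by omega : N + 1 ≤ k + (N + 1))]
        have hv0 : ((⟨0, hc0⟩ : Fin N) : ℕ) = 0 := rfl
        omega
      · rw [Fin.lt_def, oshift_iter, oshift_iter]
        rw [bseq_tail π t ht _ (by omega : N + 1 ≤ Nat.find hex + (N + 1))]
        have h2 := Nat.find_spec hex
        have hv0 : ((⟨0, hc0⟩ : Fin N) : ℕ) = 0 := rfl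
        omega
    · -- G3 : π (t+1) = N ; tail N - 1
      have hcN : N - 1 < N := by omega
      refine ⟨bseq π t ht ⟨N - 1, hcN⟩, bseq_main π t ht ⟨N - 1, hcN⟩ ?_⟩
      have haN : (π ⟨t, htN⟩ : ℕ) < N := by
        have h1 : (π ⟨t, htN⟩ : ℕ) ≤ N := Nat.lt_succ_iff.mp (Fin.is_lt _)
        rcases Nat.lt_or_ge (π ⟨t, htN⟩ : ℕ) N with h | h
        · exact h
        · exfalso
          have heq : π ⟨t, htN⟩ = π ⟨t + 1, ht1N⟩ := Fin.ext (by
            show (π ⟨t, htN⟩ : ℕ) = (π ⟨t + 1, ht1N⟩ : ℕ); omega)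
          have := congrArg Fin.val (π.injective heq)
          simp only [Fin.val_mk] at this
          omega
      have hrkN : rk π N = t + 1 := by
        rw [rk_nat_iff π (Nat.lt_succ_self N) ht1N]
        omega
      rw [show (π ⟨t + 1, by omega⟩ : ℕ) = N from hb]
      have hex : ∃ m, (bseq π t ht ⟨N - 1, hcN⟩ (m + ((π ⟨t, htN⟩ : ℕ) + 1)) : ℕ) < N - 1 := by
        rcases Nat.lt_or_ge t (N - 1) with ht0 | ht0
        · refine ⟨N - ((π ⟨t, htN⟩ : ℕ) + 1), ?_⟩
          have hsum : N - ((π ⟨t, htN⟩ : ℕ) + 1) + ((π ⟨t, htN⟩ : ℕ) + 1) = N := by omega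
          rw [hsum, bseq_val π t ht _ (Nat.lt_succ_self N), hrkN]
          unfold gfun
          split <;> omega
        · -- t = N - 1 : the condition gives π t ≠ N - 1
          have hane : (π ⟨t, htN⟩ : ℕ) ≠ N - 1 := by
            rcases hor with h | h
            · omega
            · exact h
          refine ⟨0, ?_⟩
          rw [Nat.zero_add, bseq_val π t ht _ (by omega)]
          have hle := rk_le π ((π ⟨t, htN⟩ : ℕ) + 1)
          have hnet : rk π ((π ⟨t, htN⟩ : ℕ) + 1) ≠ t := by
            intro h
            have := (rk_nat_iff π (by omega) htN).mp h
            omega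
          have hnet1 : rk π ((π ⟨t, htN⟩ : ℕ) + 1) ≠ t + 1 := by
            intro h
            have := (rk_nat_iff π (by omega) ht1N).mp h
            omega
          unfold gfun
          split <;> omega
      refine ⟨Nat.find hex, ?_, ?_⟩
      · intro k hk
        have hnk := Nat.find_min hex hk
        apply Fin.ext
        rw [oshift_iter, oshift_iter]
        rw [bseq_tail π t ht _ (by omega : N + 1 ≤ k + (N + 1))]
        have hvc : ((⟨N - 1, hcN⟩ : Fin N) : ℕ) = N - 1 := rfl
        have hlt := Fin.is_lt (bseq π t ht ⟨N - 1, hcN⟩ (k + ((π ⟨t, htN⟩ : ℕ) + 1)))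
        omega
      · rw [Fin.lt_def, oshift_iter, oshift_iter]
        rw [bseq_tail π t ht _ (by omega : N + 1 ≤ Nat.find hex + (N + 1))]
        have h2 := Nat.find_spec hex
        have hvc : ((⟨N - 1, hcN⟩ : Fin N) : ℕ) = N - 1 := rfl
        omega
end

section
/- For the one-sided shift on N = 2l symbols (l ≥ 1), the spiralling pattern τ = [2l+1, 2l-1, ..., 3, 1, 0, 2, ..., 2l-2, 2l] of length N+2 = 2l+2 is forbidden: there is no ω in {0,...,N-1}^ℕ with Σ^{τ₀}ω < Σ^{τ₁}ω < ... < Σ^{τ_{N+1}}ω. -/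
lemma lexLt_asymm {N : ℕ} {x y : ℕ → Fin N} (h : lexLt x y) (h' : lexLt y x) : False := by
  obtain ⟨n, hn, hlt⟩ := h
  obtain ⟨m, hm, hlt'⟩ := h'
  rcases Nat.lt_trichotomy n m with hc | rfl | hc
  · rw [hm n hc] at hlt; exact lt_irrefl _ hlt
  · exact lt_irrefl _ (hlt.trans hlt')
  · rw [hn m hc] at hlt'; exact lt_irrefl _ hlt'

lemma lexLt_head {N : ℕ} {x y : ℕ → Fin N} (h : lexLt x y) : x 0 ≤ y 0 := by
  obtain ⟨n, hn, hlt⟩ := h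
  rcases Nat.eq_zero_or_pos n with rfl | hpos
  · exact le_of_lt hlt
  · exact le_of_eq (hn 0 hpos)

lemma lexLt_tail {N : ℕ} {x y : ℕ → Fin N} (h : lexLt x y) (he : x 0 = y 0) :
    lexLt (oshift x) (oshift y) := by
  obtain ⟨n, hn, hlt⟩ := h
  cases n with
  | zero => rw [he] at hlt; exact absurd hlt (lt_irrefl _)
  | succ m => exact ⟨m, fun k hk => hn (k + 1) (Nat.succ_lt_succ hk), hlt⟩

/-- For the one-sided shift on `N = 2l` symbols, the spiralling pattern
`τ = [2l+1, 2l-1, ..., 3, 1, 0, 2, ..., 2l-2, 2l]` of length `N+2 = 2l+2`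
is forbidden: no point realizes it. -/
theorem spiralling_forbidden_even (l : ℕ) (hl : 1 ≤ l) (p : ℕ → ℕ)
    (hp₁ : ∀ i, i ≤ l → p i = 2 * l + 1 - 2 * i)
    (hp₂ : ∀ j, j ≤ l → p (l + 1 + j) = 2 * j) :
    ¬ ∃ ω : ℕ → Fin (2 * l), ∀ i j : ℕ, i < j → j ≤ 2 * l + 1 →
        lexLt (oshift^[p i] ω) (oshift^[p j] ω) := by
  rintro ⟨ω, H⟩
  have key : ∀ a b : ℕ, lexLt (oshift^[a] ω) (oshift^[b] ω) → ω a = ω b →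
      lexLt (oshift^[a + 1] ω) (oshift^[b + 1] ω) := by
    intro a b h he
    have h' := lexLt_tail h (by simpa [oshift_iter] using he)
    rw [Function.iterate_succ_apply' oshift a ω, Function.iterate_succ_apply' oshift b ω]
    exact h'
  have step : ∀ i, 1 ≤ i → i ≤ 2 * l → (ω (p i)).val < (ω (p (i + 1))).val := by
    intro i h1 h2
    have hle : ω (p i) ≤ ω (p (i + 1)) := by
      have := lexLt_head (H i (i + 1) (Nat.lt_succ_self i) (by omega))
      simpa [oshift_iter] using this
    rcases lt_or_eq_of_le hle with h | h
    · exact h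
    · exfalso
      have hlex := key (p i) (p (i + 1)) (H i (i + 1) (Nat.lt_succ_self i) (by omega)) h
      rcases Nat.lt_trichotomy i l with hil | heq | hil
      · -- odd side: p i = 2l+1-2i, p(i+1) = 2l-1-2i
        have e1 : p i + 1 = p (l + 1 + (l + 1 - i)) := by
          rw [hp₁ i (by omega), hp₂ (l + 1 - i) (by omega)]; omega
        have e2 : p (i + 1) + 1 = p (l + 1 + (l - i)) := by
          rw [hp₁ (i + 1) (by omega), hp₂ (l - i) (by omega)]; omega
        rw [e1, e2] at hlex
        exact lexLt_asymm hlex (H (l + 1 + (l - i)) (l + 1 + (l + 1 - i)) (by omega) (by omega))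
      · -- i = l : p l = 1, p (l+1) = 0
        have e1 : p i + 1 = p (l + 1 + 1) := by
          rw [heq, hp₁ l le_rfl, hp₂ 1 hl]; omega
        have e2 : p (i + 1) + 1 = p l := by
          have h0 := hp₂ 0 (by omega)
          rw [show l + 1 + 0 = l + 1 from rfl] at h0
          rw [heq, h0, hp₁ l le_rfl]; omega
        rw [e1, e2] at hlex
        exact lexLt_asymm hlex (H l (l + 1 + 1) (by omega) (by omega))
      · -- even side: p i = 2(i-l-1), p(i+1) = 2(i-l)
        have hpi : p i = 2 * (i - l - 1) := by
          have h' := hp₂ (i - l - 1) (by omega)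
          rw [show l + 1 + (i - l - 1) = i from by omega] at h'
          exact h'
        have hpi1 : p (i + 1) = 2 * (i - l) := by
          have h' := hp₂ (i - l) (by omega)
          rw [show l + 1 + (i - l) = i + 1 from by omega] at h'
          exact h'
        have e1 : p i + 1 = p (2 * l + 1 - i) := by
          rw [hpi, hp₁ (2 * l + 1 - i) (by omega)]; omega
        have e2 : p (i + 1) + 1 = p (2 * l - i) := by
          rw [hpi1, hp₁ (2 * l - i) (by omega)]; omega
        rw [e1, e2] at hlex
        exact lexLt_asymm hlex (H (2 * l - i) (2 * l + 1 - i) (by omega) (by omega))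
  have mono : ∀ d, d ≤ 2 * l → (ω (p 1)).val + d ≤ (ω (p (1 + d))).val := by
    intro d
    induction d with
    | zero => intro _; simp
    | succ d ih =>
      intro hd
      have h1 := ih (by omega)
      have h2 := step (1 + d) (by omega) (by omega)
      rw [show 1 + (d + 1) = (1 + d) + 1 from by omega]
      omega
  have hfin := mono (2 * l) le_rfl
  have hlt := (ω (p (1 + 2 * l))).isLt
  omega
end

section
/- For every L ≥ N+2, the one-sided shift on N ≥ 2 symbols has a forbidden pattern of length L. -/
namespace ForbiddenAux

/-- The forbidden pattern: `fwd N k` is the index of the `k`-th smallest shift. -/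
def fwd (N k : ℕ) : ℕ :=
  if 2 * k ≤ N then N - 2 * k else if k ≤ N then 2 * k - N - 1 else k

/-- Inverse of `fwd`. -/
def bwd (N j : ℕ) : ℕ :=
  if j ≤ N then (if (N + j) % 2 = 0 then (N - j) / 2 else (N + 1 + j) / 2) else j

lemma fwd_lt {N L k : ℕ} (hL : N + 2 ≤ L) (hk : k < L) : fwd N k < L := by
  unfold fwd; split_ifs <;> omega

lemma fwd_le {N k : ℕ} (hk : k ≤ N) : fwd N k ≤ N := by
  unfold fwd; split_ifs <;> omega

lemma bwd_lt {N L j : ℕ} (hL : N + 2 ≤ L) (hj : j < L) : bwd N j < L := by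
  unfold bwd; split_ifs <;> omega

lemma bwd_fwd {N k : ℕ} : bwd N (fwd N k) = k := by
  unfold fwd bwd; split_ifs <;> omega

lemma fwd_bwd {N j : ℕ} : fwd N (bwd N j) = j := by
  unfold fwd bwd; split_ifs <;> omega

lemma key {N k : ℕ} (hk : k < N) :
    bwd N (fwd N (k + 1) + 1) < bwd N (fwd N k + 1) := by
  unfold fwd bwd; split_ifs <;> omega

lemma oshift_iterate {N : ℕ} (ω : ℕ → Fin N) (a n : ℕ) :
    (oshift^[a] ω) n = ω (n + a) := by
  induction a generalizing ω with
  | zero => rfl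
  | succ a ih =>
    rw [Function.iterate_succ_apply, ih]
    rfl

lemma lexLt_asymm {N : ℕ} {u v : ℕ → Fin N} (h1 : lexLt u v) (h2 : lexLt v u) : False := by
  obtain ⟨n, hn, hn'⟩ := h1
  obtain ⟨m, hm, hm'⟩ := h2
  rcases lt_trichotomy n m with h | h | h
  · rw [hm n h] at hn'; exact lt_irrefl _ hn'
  · subst h; exact lt_irrefl _ (hn'.trans hm')
  · rw [hn m h] at hm'; exact lt_irrefl _ hm'

lemma first_lt {N : ℕ} {ω : ℕ → Fin N} {a b : ℕ}
    (h1 : lexLt (oshift^[a] ω) (oshift^[b] ω))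
    (h2 : lexLt (oshift^[b + 1] ω) (oshift^[a + 1] ω)) : ω a < ω b := by
  obtain ⟨n, hn, hn'⟩ := h1
  simp only [oshift_iterate] at hn hn'
  match n, hn, hn' with
  | 0, _, hn' => simpa using hn'
  | (m + 1), hn, hn' =>
    exfalso
    apply lexLt_asymm _ h2
    refine ⟨m, ?_, ?_⟩
    · intro k hk
      simp only [oshift_iterate]
      rw [show k + (a + 1) = (k + 1) + a from by omega,
        show k + (b + 1) = (k + 1) + b from by omega]
      exact hn (k + 1) (by omega)
    · simp only [oshift_iterate]
      rw [show m + (a + 1) = (m + 1) + a from by omega,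
        show m + (b + 1) = (m + 1) + b from by omega]
      exact hn'

end ForbiddenAux

open ForbiddenAux in
/-- For every `L ≥ N + 2`, the one-sided shift on `N ≥ 2` symbols has a
forbidden pattern of length `L`. -/
theorem shift_has_forbidden_pattern (N L : ℕ) (hN : 2 ≤ N) (hL : N + 2 ≤ L) :
    ∃ π : Equiv.Perm (Fin L), ∀ ω : ℕ → Fin N,
      ¬ ∀ i j : Fin L, i < j →
          lexLt (oshift^[(π i : ℕ)] ω) (oshift^[(π j : ℕ)] ω) := by
  refine ⟨⟨fun k => ⟨fwd N k, fwd_lt hL k.2⟩, fun j => ⟨bwd N j, bwd_lt hL j.2⟩,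
    fun k => by ext; exact bwd_fwd, fun j => by ext; exact fwd_bwd⟩, ?_⟩
  intro ω h
  have step : ∀ k, k < N → ω (fwd N k) < ω (fwd N (k + 1)) := by
    intro k hk
    apply first_lt (a := fwd N k) (b := fwd N (k + 1)) (ω := ω)
    · have := h ⟨k, by omega⟩ ⟨k + 1, by omega⟩ (by simp [Fin.mk_lt_mk])
      simpa using this
    · have hb1 : fwd N (k + 1) + 1 < L := by
        have := @fwd_le N (k + 1) (by omega); omega
      have hb2 : fwd N k + 1 < L := by
        have := @fwd_le N k (by omega); omega
      have := h ⟨bwd N (fwd N (k + 1) + 1), bwd_lt hL hb1⟩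
        ⟨bwd N (fwd N k + 1), bwd_lt hL hb2⟩ (by simp [Fin.mk_lt_mk]; exact key hk)
      simpa [fwd_bwd] using this
  have mono : ∀ k, k ≤ N → k ≤ (ω (fwd N k) : ℕ) := by
    intro k hk
    induction k with
    | zero => exact Nat.zero_le _
    | succ k ih =>
      have h1 := ih (by omega)
      have h2 := Fin.lt_def.mp (step k (by omega))
      omega
  have hN' := mono N le_rfl
  have := (ω (fwd N N)).is_lt
  omega
end

section
/- If π ∈ S_L is forbidden for T : X → X and σ ∈ S_M (M > L) is such that σ⁻¹ contains π⁻¹ as a consecutive pattern (i.e., there exist n with 0 ≤ n ≤ M-L such that the positions of n, n+1, ..., n+L-1 in σ, read in order, are order-isomorphic to the positions of 0, 1, ..., L-1 in π), then σ is forbidden for T, provided all orbit points x, Tx, ..., T^{M-1}x are distinct for each x. -/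
/-- If `π ∈ S_L` is forbidden for `T`, `σ ∈ S_M` (`M > L`), and for some
`n ≤ M - L` the positions of `n, n+1, ..., n+L-1` in `σ` are order-isomorphic
to the positions of `0, 1, ..., L-1` in `π`, then `σ` is forbidden for `T`,
provided all orbit segments of length `M` consist of distinct points. -/
theorem outgrowth_pattern_forbidden {X : Type*} [LinearOrder X] (T : X → X)
    (L M : ℕ) (hLM : L < M)
    (π : Equiv.Perm (Fin L)) (σ : Equiv.Perm (Fin M))
    (hπ : ∀ x : X, ¬ ∀ i j : Fin L, i < j → T^[(π i : ℕ)] x < T^[(π j : ℕ)] x)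
    (n : ℕ) (hn : n ≤ M - L)
    (hiso : ∀ i j : Fin L,
      σ.symm ⟨n + i, by have := i.isLt; omega⟩ < σ.symm ⟨n + j, by have := j.isLt; omega⟩
        ↔ π.symm i < π.symm j)
    (hdist : ∀ x : X, ∀ i j : ℕ, i < j → j < M → T^[i] x ≠ T^[j] x) :
    ∀ x : X, ¬ ∀ i j : Fin M, i < j → T^[(σ i : ℕ)] x < T^[(σ j : ℕ)] x := by
  intro x h
  apply hπ (T^[n] x)
  intro i j hij
  have key : σ.symm ⟨n + π i, by have := (π i).isLt; omega⟩
      < σ.symm ⟨n + π j, by have := (π j).isLt; omega⟩ := by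
    rw [hiso (π i) (π j), Equiv.symm_apply_apply, Equiv.symm_apply_apply]
    exact hij
  have := h _ _ key
  simp only [Equiv.apply_symm_apply] at this
  rw [← Function.iterate_add_apply, ← Function.iterate_add_apply]
  simpa [Nat.add_comm] using this
end

section
/- The logistic map f(x) = 4x(1-x) on [0,1] has the forbidden pattern [2,1,0] of length 3: there is no x ∈ [0,1] with f²(x) < f(x) < x. -/
/-- The logistic map. -/
def logistic (x : ℝ) : ℝ := 4 * x * (1 - x)

/-- The logistic map has the forbidden pattern `[2,1,0]`: there is no
`x ∈ [0,1]` with `f²(x) < f(x) < x`. -/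
theorem logistic_forbidden_210 :
    ¬ ∃ x ∈ Set.Icc (0 : ℝ) 1,
        logistic (logistic x) < logistic x ∧ logistic x < x := by
  rintro ⟨x, ⟨hx0, hx1⟩, h2, h1⟩
  simp only [logistic] at h2 h1
  have hx34 : 3 < 4 * x := by nlinarith
  have hy0 : 0 ≤ 4 * x * (1 - x) := by nlinarith
  nlinarith [mul_pos (by nlinarith : (0:ℝ) < 4*x - 3) (by nlinarith : (0:ℝ) < 4*x - 1),
    mul_nonneg hy0 (by nlinarith [mul_pos (by nlinarith : (0:ℝ) < 4*x - 3) (by nlinarith : (0:ℝ) < 4*x - 1)] : (0:ℝ) ≤ 3 - 4*(4*x*(1-x)))]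
end

section
/- For the logistic map f(x) = 4x(1-x), the set of x realizing the pattern [2,0,1] (i.e., f²(x) < x < f(x)) is exactly the open interval ((5-√5)/8, 3/4). -/
/-- For the logistic map, the set of `x ∈ [0,1]` realizing the pattern
`[2,0,1]` (i.e. `f²(x) < x < f(x)`) is exactly `((5-√5)/8, 3/4)`. -/
theorem logistic_P201 :
    {x : ℝ | x ∈ Set.Icc (0 : ℝ) 1 ∧ logistic (logistic x) < x ∧ x < logistic x}
      = Set.Ioo ((5 - Real.sqrt 5) / 8) (3 / 4) := by
  have hs : Real.sqrt 5 ^ 2 = 5 := Real.sq_sqrt (by norm_num)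
  have hs2 : (2:ℝ) < Real.sqrt 5 := by
    nlinarith [Real.sqrt_nonneg 5]
  have hs3 : Real.sqrt 5 < 3 := by
    nlinarith [Real.sqrt_nonneg 5]
  ext x
  simp only [Set.mem_setOf_eq, Set.mem_Icc, Set.mem_Ioo, logistic]
  set s := Real.sqrt 5
  constructor
  · rintro ⟨⟨h0, h1⟩, h2, h3⟩
    have hx : 0 < x := by nlinarith
    have hx3 : x < 3/4 := by nlinarith
    refine ⟨?_, hx3⟩
    -- f²(x) - x = x(3-4x)(16x²-20x+5) < 0, so 16x²-20x+5 < 0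
    have hq : 16*x^2 - 20*x + 5 < 0 := by nlinarith [mul_pos hx (by linarith : (0:ℝ) < 3 - 4*x)]
    nlinarith [sq_nonneg (x - (5+s)/8)]
  · rintro ⟨h1, h2⟩
    have hx : 0 < x := by nlinarith
    have hq : 16*x^2 - 20*x + 5 < 0 := by nlinarith
    refine ⟨⟨le_of_lt hx, by linarith⟩, ?_, ?_⟩
    · nlinarith [mul_pos hx (by linarith : (0:ℝ) < 3 - 4*x)]
    · nlinarith
end

section
/- For the logistic map f(x)=4x(1-x) there is no x ∈ [0,1] and no n ≥ 0 with f^{n+2}(x) < f^{n+1}(x) < f^n(x). -/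
lemma logistic_mem (x : ℝ) (hx : x ∈ Set.Icc (0:ℝ) 1) :
    logistic x ∈ Set.Icc (0:ℝ) 1 := by
  obtain ⟨h0, h1⟩ := hx
  constructor
  · unfold logistic; nlinarith [sq_nonneg (2*x-1)]
  · unfold logistic; nlinarith [sq_nonneg (2*x-1)]

lemma logistic_iter_mem (x : ℝ) (hx : x ∈ Set.Icc (0:ℝ) 1) (n : ℕ) :
    logistic^[n] x ∈ Set.Icc (0:ℝ) 1 := by
  induction n with
  | zero => simpa using hx
  | succ k ih =>
    rw [Function.iterate_succ_apply']
    exact logistic_mem _ ih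

/-- If `f(a) < a` with `a ∈ [0,1]`, then `a > 3/4`. -/
lemma gt_of_logistic_lt (a : ℝ) (ha : a ∈ Set.Icc (0:ℝ) 1) (h : logistic a < a) :
    3/4 < a := by
  obtain ⟨h0, h1⟩ := ha
  unfold logistic at h
  rcases eq_or_lt_of_le h0 with rfl | h0
  · simp at h
  · nlinarith

/-- For the logistic map there is no `x ∈ [0,1]` and no `n ≥ 0` with
`f^{n+2}(x) < f^{n+1}(x) < f^n(x)`. -/
theorem logistic_no_descending_triple :
    ¬ ∃ x ∈ Set.Icc (0 : ℝ) 1, ∃ n : ℕ,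
        logistic^[n + 2] x < logistic^[n + 1] x ∧ logistic^[n + 1] x < logistic^[n] x := by
  rintro ⟨x, hx, n, h2, h1⟩
  set a := logistic^[n] x with ha
  have hmem : a ∈ Set.Icc (0:ℝ) 1 := logistic_iter_mem x hx n
  have hb : logistic^[n+1] x = logistic a := by
    rw [Function.iterate_succ_apply']
  have hc : logistic^[n+2] x = logistic (logistic a) := by
    rw [Function.iterate_succ_apply', Function.iterate_succ_apply']
  rw [hb] at h1 h2
  rw [hc] at h2
  have ha34 : 3/4 < a := gt_of_logistic_lt a hmem h1
  have hb34 : 3/4 < logistic a :=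
    gt_of_logistic_lt _ (logistic_mem a hmem) h2
  unfold logistic at hb34
  nlinarith [hmem.2]
end
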